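/- (A priori estimate) Let $a<b$, $k>0$, $0<\lambda\le\pi/2$, $n\in\mathbb{N}$, $\epsilon\in J_n=[\,k((b-a)/((n+1)\pi-\lambda))^2,\; k((b-a)/(n\pi+\lambda))^2\,]$, let $f:[a,b]\to\mathbb{R}$ be three times continuously differentiable with $\mu_1=\sup_{t\in[a,b]}|f''(t)|$ and $\mu_2=\sup_{t\in[a,b]}|f'''(t)|$, and let $y_\epsilon$ be the solution of $\epsilon y''+ky=f(t)$ on $[a,b]$ with $y'(a)=y'(b)=0$. Then for every $t_0\in[a,b]$: $\left|y_\epsilon(t_0)-\frac{f(t_0)}{k}\right|\le\frac{1}{k\sin\lambda}\sqrt{\epsilon/k}\Big\{|f'(a)|+|f'(b)|+\sqrt{\epsilon/k}\big(|f''(a)|+\mu_2(b-a)\big)\Big\}+\frac{1}{k}\sqrt{\epsilon/k}\Big\{|f'(a)|+\sqrt{\epsilon/k}\big(\mu_1+|f''(a)|+\mu_2(b-a)\big)\Big\}$. -/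

import Mathlib

/-!
Put `ω = √(k/ε)` and `u = y - f/k`; then `u'' + ω² u = -f''/k`, `u'(a) = -f'(a)/k`,
`u'(b) = -f'(b)/k`. Integrating the Wronskian of `u` against the homogeneous solutions
`cos (ω (b - s))` and `sin (ω (t - s))` expresses `ω u(a) sin (ω (b - a))` and `ω u(t)` through
boundary values and the integrals `∫ f'' cos (ω (b - s))`, `∫ f'' sin (ω (t - s))`; one
integration by parts makes each integral `O(1/ω)` in terms of `f''(a)`, `sup |f''|` and
`sup |f'''|`. The condition `ε ∈ Jₙ` puts `ω (b - a)` in `[nπ + λ, (n + 1)π - λ]`, so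
`|sin (ω (b - a))| ≥ sin λ`, which bounds `u(a)` and then `u(t)`.
-/

open Real Set

/-- `y` (with first and second derivatives `y'`, `y''` on `[a,b]`) is a twice
continuously differentiable solution of the Neumann problem
`ε y'' + k y = f(t)` on `[a,b]`, `y'(a) = y'(b) = 0`. -/
def IsNeumannSolution (a b k ε : ℝ) (f y y' y'' : ℝ → ℝ) : Prop :=
  (∀ t ∈ Icc a b, HasDerivWithinAt y (y' t) (Icc a b) t) ∧
  (∀ t ∈ Icc a b, HasDerivWithinAt y' (y'' t) (Icc a b) t) ∧
  ContinuousOn y'' (Icc a b) ∧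
  (∀ t ∈ Icc a b, ε * y'' t + k * y t = f t) ∧
  y' a = 0 ∧ y' b = 0

theorem integral_eq_sub_of_hasDerivWithinAt_Icc {F F' : ℝ → ℝ} {c d : ℝ} (hcd : c ≤ d)
    (hF : ∀ t ∈ Icc c d, HasDerivWithinAt F (F' t) (Icc c d) t)
    (hF' : IntervalIntegrable F' MeasureTheory.volume c d) :
    ∫ t in c..d, F' t = F d - F c :=
  intervalIntegral.integral_eq_sub_of_hasDerivAt_of_le hcd
    (fun t ht => (hF t ht).continuousWithinAt)
    (fun t ht => (hF t (Ioo_subset_Icc_self ht)).hasDerivAt (Icc_mem_nhds ht.1 ht.2)) hF'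

theorem abs_integral_mul_deriv_le {g g' F F' : ℝ → ℝ} {c d M B : ℝ} (hcd : c ≤ d)
    (hg : ∀ x ∈ Icc c d, HasDerivWithinAt g (g' x) (Icc c d) x)
    (hg' : ContinuousOn g' (Icc c d)) (hF : ∀ x, HasDerivAt F (F' x) x) (hF' : Continuous F')
    (hM : ∀ x ∈ Icc c d, |g' x| ≤ M) (hB : ∀ x, |F x| ≤ B) :
    |∫ x in c..d, g x * F' x| ≤ |g d * F d| + |g c * F c| + M * B * (d - c) := by
  rw [← uIcc_of_le hcd] at hg hg'
  rw [intervalIntegral.integral_mul_deriv_eq_deriv_mul_of_hasDerivWithinAt hg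
    (fun x _ => (hF x).hasDerivWithinAt) hg'.intervalIntegrable (hF'.intervalIntegrable _ _)]
  have hrest : |∫ x in c..d, g' x * F x| ≤ M * B * (d - c) := by
    have h := intervalIntegral.norm_integral_le_of_norm_le_const (a := c) (b := d)
      (f := fun x => g' x * F x) (C := M * B) fun x hx => by
        have hx' : x ∈ Icc c d := Ioc_subset_Icc_self ((uIoc_of_le hcd) ▸ hx)
        rw [Real.norm_eq_abs, abs_mul]
        exact mul_le_mul (hM x hx') (hB x) (abs_nonneg _) ((abs_nonneg _).trans (hM x hx'))
    rwa [abs_of_nonneg (sub_nonneg.2 hcd)] at h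
  calc _ ≤ |g d * F d - g c * F c| + |∫ x in c..d, g' x * F x| := abs_sub _ _
    _ ≤ _ := add_le_add (abs_sub _ _) hrest

theorem hasDerivAt_sin_mul_sub (ω t s : ℝ) :
    HasDerivAt (fun s => sin (ω * (t - s))) (-ω * cos (ω * (t - s))) s := by
  have h := ((hasDerivAt_id' s).const_sub t).const_mul ω |>.sin
  convert h using 1
  ring

theorem hasDerivAt_cos_mul_sub (ω t s : ℝ) :
    HasDerivAt (fun s => cos (ω * (t - s))) (ω * sin (ω * (t - s))) s := by
  have h := ((hasDerivAt_id' s).const_sub t).const_mul ω |>.cos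
  convert h using 1
  ring

section Oscillator

variable {u u' u'' g : ℝ → ℝ} {a b ω : ℝ}

theorem integral_mul_eq_wronskian_sub {ψ ψ' : ℝ → ℝ} (hab : a ≤ b)
    (hu : ∀ t ∈ Icc a b, HasDerivWithinAt u (u' t) (Icc a b) t)
    (hu' : ∀ t ∈ Icc a b, HasDerivWithinAt u' (u'' t) (Icc a b) t)
    (hode : ∀ t ∈ Icc a b, u'' t + ω ^ 2 * u t = g t) (hg : ContinuousOn g (Icc a b))
    (hψ : ∀ s, HasDerivAt ψ (ψ' s) s) (hψ' : ∀ s, HasDerivAt ψ' (-ω ^ 2 * ψ s) s) :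
    ∫ s in a..b, g s * ψ s = (u' b * ψ b - u b * ψ' b) - (u' a * ψ a - u a * ψ' a) := by
  refine integral_eq_sub_of_hasDerivWithinAt_Icc (F := fun s => u' s * ψ s - u s * ψ' s) hab
    (fun t ht => ?_) ?_
  · have h := ((hu' t ht).mul (hψ t).hasDerivWithinAt).sub
      ((hu t ht).mul (hψ' t).hasDerivWithinAt)
    refine h.congr_deriv ?_
    rw [← hode t ht]
    ring
  · have hψc : Continuous ψ := continuous_iff_continuousAt.2 fun s => (hψ s).continuousAt
    exact (hg.mul hψc.continuousOn).intervalIntegrable_of_Icc hab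

theorem mul_sin_mul_sub_eq (hab : a ≤ b)
    (hu : ∀ t ∈ Icc a b, HasDerivWithinAt u (u' t) (Icc a b) t)
    (hu' : ∀ t ∈ Icc a b, HasDerivWithinAt u' (u'' t) (Icc a b) t)
    (hode : ∀ t ∈ Icc a b, u'' t + ω ^ 2 * u t = g t) (hg : ContinuousOn g (Icc a b)) :
    ω * u a * sin (ω * (b - a)) =
      (∫ s in a..b, g s * cos (ω * (b - s))) - u' b + u' a * cos (ω * (b - a)) := by
  have h := integral_mul_eq_wronskian_sub hab hu hu' hode hg (hasDerivAt_cos_mul_sub ω b)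
    fun s => (hasDerivAt_sin_mul_sub ω b s).const_mul ω |>.congr_deriv (by ring)
  simp only [sub_self, mul_zero, sin_zero, cos_zero] at h
  linear_combination -h

theorem variation_of_constants {t : ℝ}
    (hu : ∀ t ∈ Icc a b, HasDerivWithinAt u (u' t) (Icc a b) t)
    (hu' : ∀ t ∈ Icc a b, HasDerivWithinAt u' (u'' t) (Icc a b) t)
    (hode : ∀ t ∈ Icc a b, u'' t + ω ^ 2 * u t = g t) (hg : ContinuousOn g (Icc a b))
    (ht : t ∈ Icc a b) :
    ω * u t = ω * u a * cos (ω * (t - a)) + u' a * sin (ω * (t - a)) +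
      ∫ s in a..t, g s * sin (ω * (t - s)) := by
  have hsub : Icc a t ⊆ Icc a b := Icc_subset_Icc_right ht.2
  have h := integral_mul_eq_wronskian_sub ht.1
    (fun s hs => (hu s (hsub hs)).mono hsub) (fun s hs => (hu' s (hsub hs)).mono hsub)
    (fun s hs => hode s (hsub hs)) (hg.mono hsub) (hasDerivAt_sin_mul_sub ω t)
    fun s => (hasDerivAt_cos_mul_sub ω t s).const_mul (-ω) |>.congr_deriv (by ring)
  simp only [sub_self, mul_zero, sin_zero, cos_zero] at h
  linear_combination -h

end Oscillator

theorem abs_div_le_inv_of_abs_le_one {x ω : ℝ} (hω : 0 < ω) (hx : |x| ≤ 1) :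
    |x / ω| ≤ ω⁻¹ := by
  rw [abs_div, abs_of_pos hω, div_eq_mul_inv]
  exact mul_le_of_le_one_left (inv_nonneg.2 hω.le) hx

section KernelBounds

variable {g g' : ℝ → ℝ} {a b ω M : ℝ}

theorem abs_integral_mul_cos_mul_sub_le (hab : a ≤ b) (hω : 0 < ω)
    (hg : ∀ t ∈ Icc a b, HasDerivWithinAt g (g' t) (Icc a b) t)
    (hg' : ContinuousOn g' (Icc a b)) (hM : ∀ t ∈ Icc a b, |g' t| ≤ M) :
    |∫ s in a..b, g s * cos (ω * (b - s))| ≤ ω⁻¹ * (|g a| + M * (b - a)) := by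
  have hF (s : ℝ) : HasDerivAt (fun s => -sin (ω * (b - s)) / ω) (cos (ω * (b - s))) s :=
    (hasDerivAt_sin_mul_sub ω b s).neg.div_const ω |>.congr_deriv (by field_simp)
  have h := abs_integral_mul_deriv_le hab hg hg' hF (by fun_prop) hM
    fun s => abs_div_le_inv_of_abs_le_one hω (by rw [abs_neg]; exact abs_sin_le_one _)
  have ha : |g a * (-sin (ω * (b - a)) / ω)| ≤ |g a| * ω⁻¹ := by
    rw [abs_mul]
    exact mul_le_mul_of_nonneg_left
      (abs_div_le_inv_of_abs_le_one hω (by rw [abs_neg]; exact abs_sin_le_one _)) (abs_nonneg _)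
  simp only [sub_self, mul_zero, sin_zero, neg_zero, zero_div, abs_zero] at h
  linarith

theorem abs_integral_mul_sin_mul_sub_le (hab : a ≤ b) (hω : 0 < ω)
    (hg : ∀ t ∈ Icc a b, HasDerivWithinAt g (g' t) (Icc a b) t)
    (hg' : ContinuousOn g' (Icc a b)) (hM : ∀ t ∈ Icc a b, |g' t| ≤ M) :
    |∫ s in a..b, g s * sin (ω * (b - s))| ≤ ω⁻¹ * (|g b| + |g a| + M * (b - a)) := by
  have hF (s : ℝ) : HasDerivAt (fun s => cos (ω * (b - s)) / ω) (sin (ω * (b - s))) s :=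
    (hasDerivAt_cos_mul_sub ω b s).div_const ω |>.congr_deriv (by field_simp)
  have h := abs_integral_mul_deriv_le hab hg hg' hF (by fun_prop) hM
    fun s => abs_div_le_inv_of_abs_le_one hω (abs_cos_le_one _)
  have hbound (t : ℝ) : |g t * (cos (ω * (b - t)) / ω)| ≤ |g t| * ω⁻¹ := by
    rw [abs_mul]
    exact mul_le_mul_of_nonneg_left (abs_div_le_inv_of_abs_le_one hω (abs_cos_le_one _))
      (abs_nonneg _)
  linarith [hbound a, hbound b]

end KernelBounds

section APriori

variable {u u' u'' g g' : ℝ → ℝ} {a b ω M₁ M₂ σ : ℝ}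

theorem abs_left_le_of_le_abs_sin (hab : a ≤ b) (hω : 0 < ω) (hσ : 0 < σ)
    (hsin : σ ≤ |sin (ω * (b - a))|)
    (hu : ∀ t ∈ Icc a b, HasDerivWithinAt u (u' t) (Icc a b) t)
    (hu' : ∀ t ∈ Icc a b, HasDerivWithinAt u' (u'' t) (Icc a b) t)
    (hode : ∀ t ∈ Icc a b, u'' t + ω ^ 2 * u t = g t)
    (hg : ∀ t ∈ Icc a b, HasDerivWithinAt g (g' t) (Icc a b) t)
    (hg' : ContinuousOn g' (Icc a b)) (hM₂ : ∀ t ∈ Icc a b, |g' t| ≤ M₂) :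
    |u a| ≤ σ⁻¹ * ω⁻¹ * (|u' a| + |u' b| + ω⁻¹ * (|g a| + M₂ * (b - a))) := by
  have hgc : ContinuousOn g (Icc a b) := fun t ht => (hg t ht).continuousWithinAt
  have hI := abs_integral_mul_cos_mul_sub_le hab hω hg hg' hM₂
  have key : ω * σ * |u a| ≤ |u' a| + |u' b| + ω⁻¹ * (|g a| + M₂ * (b - a)) :=
    calc ω * σ * |u a| ≤ |ω * u a * sin (ω * (b - a))| := by
          rw [abs_mul, abs_mul, abs_of_pos hω, mul_right_comm]
          exact mul_le_mul_of_nonneg_left hsin (by positivity)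
      _ = |(∫ s in a..b, g s * cos (ω * (b - s))) - u' b + u' a * cos (ω * (b - a))| := by
          rw [mul_sin_mul_sub_eq hab hu hu' hode hgc]
      _ ≤ |∫ s in a..b, g s * cos (ω * (b - s))| + |u' b| + |u' a| * 1 := by
          grw [abs_add_le, abs_sub, abs_mul, abs_cos_le_one]
      _ ≤ _ := by linarith
  rw [← mul_inv, inv_mul_eq_div, le_div_iff₀ (by positivity)]
  linarith

theorem abs_le_abs_left_add {t : ℝ} (hω : 0 < ω)
    (hu : ∀ t ∈ Icc a b, HasDerivWithinAt u (u' t) (Icc a b) t)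
    (hu' : ∀ t ∈ Icc a b, HasDerivWithinAt u' (u'' t) (Icc a b) t)
    (hode : ∀ t ∈ Icc a b, u'' t + ω ^ 2 * u t = g t)
    (hg : ∀ t ∈ Icc a b, HasDerivWithinAt g (g' t) (Icc a b) t)
    (hg' : ContinuousOn g' (Icc a b)) (hM₁ : ∀ t ∈ Icc a b, |g t| ≤ M₁)
    (hM₂ : ∀ t ∈ Icc a b, |g' t| ≤ M₂) (ht : t ∈ Icc a b) :
    |u t| ≤ |u a| + ω⁻¹ * (|u' a| + ω⁻¹ * (M₁ + |g a| + M₂ * (b - a))) := by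
  have hgc : ContinuousOn g (Icc a b) := fun t ht => (hg t ht).continuousWithinAt
  have hsub : Icc a t ⊆ Icc a b := Icc_subset_Icc_right ht.2
  have hI := abs_integral_mul_sin_mul_sub_le ht.1 hω (fun s hs => (hg s (hsub hs)).mono hsub)
    (hg'.mono hsub) fun s hs => hM₂ s (hsub hs)
  have hM₂t : M₂ * (t - a) ≤ M₂ * (b - a) :=
    mul_le_mul_of_nonneg_left (by linarith [ht.2]) ((abs_nonneg _).trans (hM₂ t ht))
  have key : ω * |u t| ≤ ω * |u a| + |u' a| + ω⁻¹ * (M₁ + |g a| + M₂ * (b - a)) :=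
    calc ω * |u t| = |ω * u a * cos (ω * (t - a)) + u' a * sin (ω * (t - a)) +
          ∫ s in a..t, g s * sin (ω * (t - s))| := by
          rw [← variation_of_constants hu hu' hode hgc ht, abs_mul, abs_of_pos hω]
      _ ≤ ω * |u a| * 1 + |u' a| * 1 + |∫ s in a..t, g s * sin (ω * (t - s))| := by
          grw [abs_add_le, abs_add_le, abs_mul, abs_mul, abs_mul, abs_of_pos hω,
            abs_cos_le_one, abs_sin_le_one]
      _ ≤ _ := by
          grw [hI, hM₁ t ht, hM₂t]
          linarith
  rw [← sub_le_iff_le_add', le_inv_mul_iff₀ hω]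
  linarith

end APriori

theorem sqrt_div_mul_mem_Icc {k ε L A B : ℝ} (hk : 0 ≤ k) (hε : 0 < ε) (hL : 0 ≤ L)
    (hA : 0 < A) (hB : 0 < B) (hεAB : ε ∈ Icc (k * (L / B) ^ 2) (k * (L / A) ^ 2)) :
    √(k / ε) * L ∈ Icc A B := by
  have hsq : (√(k / ε) * L) ^ 2 = k * L ^ 2 / ε := by
    rw [mul_pow, sq_sqrt (by positivity)]
    ring
  have hωL : 0 ≤ √(k / ε) * L := by positivity
  obtain ⟨hεB, hεA⟩ := hεAB
  rw [div_pow, mul_div_assoc', le_div_iff₀ (by positivity)] at hεA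
  rw [div_pow, mul_div_assoc', div_le_iff₀ (by positivity)] at hεB
  constructor
  · rw [← pow_le_pow_iff_left₀ hA.le hωL two_ne_zero, hsq, le_div_iff₀ hε]
    linarith
  · rw [← pow_le_pow_iff_left₀ hωL hB.le two_ne_zero, hsq, div_le_iff₀ hε]
    linarith

theorem Real.sin_le_abs_sin_of_mem_Icc {lam x : ℝ} (n : ℕ) (hlam : -(π / 2) ≤ lam)
    (hx : x ∈ Icc (n * π + lam) ((n + 1) * π - lam)) : sin lam ≤ |sin x| := by
  obtain ⟨r, rfl⟩ : ∃ r, x = r + n * π := ⟨x - n * π, by ring⟩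
  have hr : r ∈ Icc lam (π - lam) := ⟨by linarith [hx.1], by linarith [hx.2]⟩
  rw [sin_add_nat_mul_pi, abs_mul, abs_pow, abs_neg, abs_one, one_pow, one_mul]
  refine le_trans ?_ (le_abs_self _)
  rcases le_or_gt r (π / 2) with h | h
  · exact sin_le_sin_of_le_of_le_pi_div_two hlam h hr.1
  · rw [← sin_pi_sub r]
    exact sin_le_sin_of_le_of_le_pi_div_two hlam (by linarith) (by linarith [hr.2])

theorem abs_le_sSup_image_abs {h : ℝ → ℝ} {s : Set ℝ} (hs : IsCompact s)
    (hh : ContinuousOn h s) {x : ℝ} (hx : x ∈ s) : |h x| ≤ sSup ((fun t => |h t|) '' s) :=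
  le_csSup (hs.bddAbove_image hh.abs) (mem_image_of_mem _ hx)

theorem IsNeumannSolution.ode_sub_div {a b k ε : ℝ} {f y y' y'' : ℝ → ℝ}
    (hy : IsNeumannSolution a b k ε f y y' y'') (hk : 0 < k) (hε : 0 < ε) :
    ∀ t ∈ Icc a b, y'' t + √(k / ε) ^ 2 * (y t - f t / k) = 0 := by
  intro t ht
  rw [sq_sqrt (by positivity)]
  field_simp
  linear_combination hy.2.2.2.1 t ht

theorem IsNeumannSolution.abs_sub_div_le {a b k ε σ t : ℝ}
    {f f' f'' f''' y y' y'' : ℝ → ℝ}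
    (hy : IsNeumannSolution a b k ε f y y' y'') (hab : a ≤ b) (hk : 0 < k) (hε : 0 < ε)
    (hσ : 0 < σ) (hsin : σ ≤ |sin (√(k / ε) * (b - a))|)
    (hf : ∀ t ∈ Icc a b, HasDerivWithinAt f (f' t) (Icc a b) t)
    (hf' : ∀ t ∈ Icc a b, HasDerivWithinAt f' (f'' t) (Icc a b) t)
    (hf'' : ∀ t ∈ Icc a b, HasDerivWithinAt f'' (f''' t) (Icc a b) t)
    (hf''' : ContinuousOn f''' (Icc a b)) (ht : t ∈ Icc a b) :
    |y t - f t / k| ≤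
      (1 / (k * σ)) * √(ε / k) *
          (|f' a| + |f' b| +
            √(ε / k) * (|f'' a| + sSup ((fun t => |f''' t|) '' Icc a b) * (b - a))) +
        (1 / k) * √(ε / k) *
          (|f' a| + √(ε / k) * (sSup ((fun t => |f'' t|) '' Icc a b) + |f'' a| +
            sSup ((fun t => |f''' t|) '' Icc a b) * (b - a))) := by
  set μ₁ := sSup ((fun t => |f'' t|) '' Icc a b)
  set μ₂ := sSup ((fun t => |f''' t|) '' Icc a b)
  have hω : 0 < √(k / ε) := sqrt_pos.2 (by positivity)
  have hyode := hy.ode_sub_div hk hε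
  obtain ⟨hy', hy'', -, -, hya, hyb⟩ := hy
  have hu t (ht : t ∈ Icc a b) : HasDerivWithinAt (fun t => y t - f t / k) (y' t - f' t / k)
      (Icc a b) t := (hy' t ht).sub ((hf t ht).div_const k)
  have hu' t (ht : t ∈ Icc a b) : HasDerivWithinAt (fun t => y' t - f' t / k)
      (y'' t - f'' t / k) (Icc a b) t := (hy'' t ht).sub ((hf' t ht).div_const k)
  have hode t (ht : t ∈ Icc a b) :
      (y'' t - f'' t / k) + √(k / ε) ^ 2 * (y t - f t / k) = -f'' t / k := by
    linear_combination hyode t ht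
  have hg t (ht : t ∈ Icc a b) : HasDerivWithinAt (fun t => -f'' t / k) (-f''' t / k)
      (Icc a b) t := (hf'' t ht).neg.div_const k
  have hg' : ContinuousOn (fun t => -f''' t / k) (Icc a b) := hf'''.neg.div_const k
  have hM₁ t (ht : t ∈ Icc a b) : |-f'' t / k| ≤ μ₁ / k := by
    rw [abs_div, abs_neg, abs_of_pos hk]
    exact div_le_div_of_nonneg_right (abs_le_sSup_image_abs isCompact_Icc
      (fun t ht => (hf'' t ht).continuousWithinAt) ht) hk.le
  have hM₂ t (ht : t ∈ Icc a b) : |-f''' t / k| ≤ μ₂ / k := by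
    rw [abs_div, abs_neg, abs_of_pos hk]
    exact div_le_div_of_nonneg_right (abs_le_sSup_image_abs isCompact_Icc hf''' ht) hk.le
  have hleft := abs_left_le_of_le_abs_sin hab hω hσ hsin hu hu' hode hg hg' hM₂
  have hmid := abs_le_abs_left_add hω hu hu' hode hg hg' hM₁ hM₂ ht
  simp only [hya, hyb] at hleft hmid
  have hq : √(ε / k) = (√(k / ε))⁻¹ := by rw [← sqrt_inv, inv_div]
  refine hmid.trans ((add_le_add_left hleft _).trans_eq ?_)
  simp only [zero_sub, abs_neg, abs_div, abs_of_pos hk, hq]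
  field_simp

/-- a priori estimate: for `ε ∈ Jₙ`, a three times continuously
differentiable `f` on `[a,b]` with `μ₁ = sup |f''|`, `μ₂ = sup |f'''|`, and `y_ε` the
solution of the Neumann problem, for every `t₀ ∈ [a,b]`:
`|y_ε(t₀) - f(t₀)/k|
   ≤ (1/(k sin λ)) √(ε/k) { |f'(a)| + |f'(b)| + √(ε/k)(|f''(a)| + μ₂ (b-a)) }
     + (1/k) √(ε/k) { |f'(a)| + √(ε/k)(μ₁ + |f''(a)| + μ₂ (b-a)) }`. -/
theorem stmt_11 (a b k lam ε : ℝ) (n : ℕ) (f f' f'' f''' y y' y'' : ℝ → ℝ)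
    (hab : a < b) (hk : 0 < k) (hlam : 0 < lam) (hlam' : lam ≤ π / 2)
    (hε : ε ∈ Icc (k * ((b - a) / ((n + 1) * π - lam)) ^ 2)
      (k * ((b - a) / (n * π + lam)) ^ 2))
    (hf : ∀ t ∈ Icc a b, HasDerivWithinAt f (f' t) (Icc a b) t)
    (hf' : ∀ t ∈ Icc a b, HasDerivWithinAt f' (f'' t) (Icc a b) t)
    (hf'' : ∀ t ∈ Icc a b, HasDerivWithinAt f'' (f''' t) (Icc a b) t)
    (hf''' : ContinuousOn f''' (Icc a b))
    (hy : IsNeumannSolution a b k ε f y y' y'') :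
    ∀ t₀ ∈ Icc a b,
      |y t₀ - f t₀ / k| ≤
        (1 / (k * Real.sin lam)) * Real.sqrt (ε / k) *
            (|f' a| + |f' b| +
              Real.sqrt (ε / k) *
                (|f'' a| + sSup ((fun t => |f''' t|) '' Icc a b) * (b - a))) +
          (1 / k) * Real.sqrt (ε / k) *
            (|f' a| +
              Real.sqrt (ε / k) *
                (sSup ((fun t => |f'' t|) '' Icc a b) + |f'' a| +
                  sSup ((fun t => |f''' t|) '' Icc a b) * (b - a))) := by
  intro t₀ ht₀
  have hA : 0 < (n : ℝ) * π + lam := by positivity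
  have hB : 0 < ((n : ℝ) + 1) * π - lam := by nlinarith [pi_pos]
  have hε0 : 0 < ε := hε.1.trans_lt' (mul_pos hk (pow_pos (div_pos (sub_pos.2 hab) hB) 2))
  have hsin : sin lam ≤ |sin (√(k / ε) * (b - a))| :=
    sin_le_abs_sin_of_mem_Icc n (by linarith [pi_pos])
      (sqrt_div_mul_mem_Icc hk.le hε0 (sub_nonneg.2 hab.le) hA hB hε)
  exact hy.abs_sub_div_le hab.le hk hε0 (sin_pos_of_pos_of_lt_pi hlam (by linarith [pi_pos]))
    hsin hf hf' hf'' hf''' ht₀
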